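/- arXiv:1904.03212 — 7 statements merged into one kernel-verified Lean document; each statement's English description precedes it below -/
import Mathlib

section
/- Let n ≥ 1 and let C ∈ Matrix (Fin n) (Fin n) ℂ be cramped, i.e., 0 ∉ W(C). Then there exists θ ∈ ℝ such that for every x ∈ EuclideanSpace ℂ (Fin n) with ‖x‖ = 1 one has Re(Complex.exp(−θ * Complex.I) * (star x ⬝ᵥ C.mulVec x)) > 0; that is, the numerical range of a cramped matrix is contained in an open half-plane whose boundary passes through the origin. -/
/-!
The numerical range `W` is compact, being a continuous image of the unit sphere, and convex by the
Toeplitz–Hausdorff theorem. A closed convex set missing `0` is strictly separated from it by a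
real-linear functional `z ↦ Re (conj w * z)`, and `θ = arg w` gives the half-plane.

After an affine change `T ↦ a • (T - c • id)`, convexity reduces to `[0, 1] ⊆ W` whenever
`0, 1 ∈ W`. Take unit vectors with `⟪u, T u⟫ = 0` and `⟪y, T y⟫ = 1`, the phase of `u` chosen so
that `⟪u, T y⟫ + ⟪y, T u⟫` is real. Then the quadratic form is real along the segment from `u` to
`y`, and the intermediate value theorem applies to its normalisation.
-/

open Matrix

def numericalRange {n : ℕ} (C : Matrix (Fin n) (Fin n) ℂ) : Set ℂ :=
  {z : ℂ | ∃ x : EuclideanSpace ℂ (Fin n), ‖x‖ = 1 ∧ z = star x ⬝ᵥ C.mulVec x}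

open Complex
open scoped InnerProductSpace ComplexConjugate

namespace LinearMap

variable {E : Type*} [NormedAddCommGroup E] [InnerProductSpace ℂ E] (T : E →ₗ[ℂ] E)

def numericalRange : Set ℂ := (fun x => ⟪x, T x⟫_ℂ) '' Metric.sphere 0 1

theorem inner_smul_map_smul (c : ℂ) (v : E) :
    ⟪c • v, T (c • v)⟫_ℂ = (‖c‖ : ℂ) ^ 2 * ⟪v, T v⟫_ℂ := by
  rw [map_smul, inner_smul_left, inner_smul_right, ← mul_assoc, conj_mul']

theorem inner_ofReal_smul_add_map (a b : ℝ) (u v : E) :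
    ⟪(a : ℂ) • u + (b : ℂ) • v, T ((a : ℂ) • u + (b : ℂ) • v)⟫_ℂ =
      a ^ 2 * ⟪u, T u⟫_ℂ + b ^ 2 * ⟪v, T v⟫_ℂ + a * b * (⟪u, T v⟫_ℂ + ⟪v, T u⟫_ℂ) := by
  simp only [map_add, map_smul, inner_add_left, inner_add_right, inner_smul_left,
    inner_smul_right, conj_ofReal]
  ring

theorem inner_div_norm_sq_mem_numericalRange {x : E} (hx : x ≠ 0) :
    ⟪x, T x⟫_ℂ / (‖x‖ : ℂ) ^ 2 ∈ T.numericalRange := by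
  refine ⟨((‖x‖⁻¹ : ℝ) : ℂ) • x, ?_, ?_⟩
  · simp [norm_smul, norm_ne_zero_iff.mpr hx]
  · simp only [inner_smul_map_smul, norm_real, norm_inv, norm_norm]
    push_cast
    ring

theorem exists_norm_eq_one_im_inner_add_eq_zero (x y : E) :
    ∃ c : ℂ, ‖c‖ = 1 ∧ (⟪c • x, T y⟫_ℂ + ⟪y, T (c • x)⟫_ℂ).im = 0 := by
  -- The imaginary part is that of `conj c * d`, and `conj c * d = ‖d‖` for `c = exp (arg d * I)`.
  set d := ⟪x, T y⟫_ℂ - conj ⟪y, T x⟫_ℂ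
  refine ⟨exp (arg d * I), norm_exp_ofReal_mul_I _, ?_⟩
  set c := exp (arg d * I)
  have hc : conj c * c = 1 := by rw [conj_mul', norm_exp_ofReal_mul_I]; simp
  have hd : conj c * d = ‖d‖ :=
    calc conj c * d = conj c * (‖d‖ * c) := by rw [norm_mul_exp_arg_mul_I]
      _ = ‖d‖ := by rw [mul_left_comm, hc, mul_one]
  have := congrArg im hd
  rw [map_smul, inner_smul_left, inner_smul_right]
  simp only [d, mul_sub, sub_im, ofReal_im, ← map_mul, conj_im, add_im] at this ⊢
  linarith

theorem ofReal_mem_numericalRange_of_zero_mem_of_one_mem (h0 : (0 : ℂ) ∈ T.numericalRange)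
    (h1 : (1 : ℂ) ∈ T.numericalRange) {t : ℝ} (ht : t ∈ Set.Icc (0 : ℝ) 1) :
    (t : ℂ) ∈ T.numericalRange := by
  obtain ⟨x, hx, hx0 : ⟪x, T x⟫_ℂ = 0⟩ := h0
  obtain ⟨y, hy, hy1 : ⟪y, T y⟫_ℂ = 1⟩ := h1
  rw [mem_sphere_zero_iff_norm] at hx hy
  obtain ⟨c, hc, hK⟩ := T.exists_norm_eq_one_im_inner_add_eq_zero x y
  set u := c • x
  set K := ⟪u, T y⟫_ℂ + ⟪y, T u⟫_ℂ
  have hu : ‖u‖ = 1 := by rw [norm_smul, hc, hx, one_mul]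
  have hu0 : ⟪u, T u⟫_ℂ = 0 := by simp only [u, inner_smul_map_smul, hx0, mul_zero]
  set p : ℝ → E := fun s => ((1 - s : ℝ) : ℂ) • u + (s : ℂ) • y
  have hQp (s : ℝ) : ⟪p s, T (p s)⟫_ℂ = ((s ^ 2 + (1 - s) * s * K.re : ℝ) : ℂ) := by
    have hKre : K = K.re := Complex.ext rfl (by simp [hK])
    rw [inner_ofReal_smul_add_map, hu0, hy1]
    push_cast
    linear_combination ((1 - s : ℂ) * s) * hKre
  -- `u` and `y` are linearly independent, since the form vanishes on one and not on the other.
  have hp (s : ℝ) : p s ≠ 0 := by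
    intro hps
    have hsy : (s : ℂ) • y = ((s - 1 : ℝ) : ℂ) • u := by
      push_cast
      linear_combination (norm := module) hps
    have := congrArg (fun v => ⟪v, T v⟫_ℂ) hsy
    simp only [inner_smul_map_smul, hu0, hy1, mul_zero, mul_one, norm_real] at this
    obtain rfl : s = 0 := by simpa using this
    have hu0' : u = 0 := by simpa [p] using hps
    simp [hu0'] at hu
  set f : ℝ → ℝ := fun s => (s ^ 2 + (1 - s) * s * K.re) / ‖p s‖ ^ 2
  have hf : Continuous f := by
    have hpc : Continuous p := by fun_prop
    exact (by fun_prop : Continuous fun s : ℝ => s ^ 2 + (1 - s) * s * K.re).div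
      (hpc.norm.pow 2) fun s => pow_ne_zero 2 (norm_ne_zero_iff.mpr (hp s))
  have hft : t ∈ Set.Icc (f 0) (f 1) := by simpa [f, p, hu, hy] using ht
  obtain ⟨s, -, hfs⟩ := intermediate_value_Icc zero_le_one hf.continuousOn hft
  convert T.inner_div_norm_sq_mem_numericalRange (hp s)
  rw [hQp, ← hfs]
  push_cast [f]
  rfl

theorem numericalRange_smul_sub_smul_id (a c : ℂ) :
    (a • (T - c • LinearMap.id)).numericalRange = (fun z => a * (z - c)) '' T.numericalRange := by
  simp only [numericalRange, Set.image_image]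
  refine Set.image_congr fun x hx => ?_
  rw [mem_sphere_zero_iff_norm] at hx
  simp [hx]

theorem convex_numericalRange : Convex ℝ T.numericalRange := by
  intro z₁ hz₁ z₂ hz₂ a b ha hb hab
  rcases eq_or_ne z₁ z₂ with rfl | hne
  · rwa [← add_smul, hab, one_smul]
  have hS := T.numericalRange_smul_sub_smul_id (z₂ - z₁)⁻¹ z₁
  have hd : z₂ - z₁ ≠ 0 := sub_ne_zero.2 hne.symm
  have h0 : (0 : ℂ) ∈ ((z₂ - z₁)⁻¹ • (T - z₁ • LinearMap.id)).numericalRange :=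
    hS ▸ ⟨z₁, hz₁, by simp⟩
  have h1 : (1 : ℂ) ∈ ((z₂ - z₁)⁻¹ • (T - z₁ • LinearMap.id)).numericalRange :=
    hS ▸ ⟨z₂, hz₂, inv_mul_cancel₀ hd⟩
  obtain ⟨w, hw, hwb : (z₂ - z₁)⁻¹ * (w - z₁) = b⟩ :=
    hS ▸ ofReal_mem_numericalRange_of_zero_mem_of_one_mem _ h0 h1 ⟨hb, by linarith⟩
  rw [inv_mul_eq_iff_eq_mul₀ hd] at hwb
  have hab' : (a : ℂ) + b = 1 := mod_cast hab
  convert hw using 1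
  rw [real_smul, real_smul]
  linear_combination -hwb + z₁ * hab'

theorem isCompact_numericalRange [FiniteDimensional ℂ E] : IsCompact T.numericalRange :=
  (isCompact_sphere 0 1).image (continuous_id.inner T.continuous_of_finiteDimensional)

end LinearMap

theorem Convex.exists_forall_pos_re_exp_neg_mul {K : Set ℂ} (hK : Convex ℝ K)
    (hKc : IsClosed K) (h0 : 0 ∉ K) : ∃ θ : ℝ, ∀ z ∈ K, 0 < (exp (-θ * I) * z).re := by
  obtain ⟨f, u, hf0, hfK⟩ := geometric_hahn_banach_point_closed hK hKc h0
  set w := (InnerProductSpace.toDual ℝ ℂ).symm f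
  have hw : conj w = ‖w‖ * exp (-arg w * I) := by
    conv_lhs => rw [← norm_mul_exp_arg_mul_I w]
    rw [map_mul, conj_ofReal, ← exp_conj, map_mul, conj_ofReal, conj_I, neg_mul, mul_neg]
  refine ⟨arg w, fun z hz => pos_of_mul_pos_right ?_ (norm_nonneg w)⟩
  calc 0 = f 0 := f.map_zero.symm
    _ < f z := hf0.trans (hfK z hz)
    _ = (z * conj w).re := by rw [← InnerProductSpace.toDual_symm_apply, Complex.inner]
    _ = ‖w‖ * (exp (-arg w * I) * z).re := by rw [hw, ← re_ofReal_mul]; ring_nf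

theorem Matrix.star_dotProduct_mulVec_eq_inner_toLpLin {𝕜 n : Type*} [RCLike 𝕜] [Fintype n]
    [DecidableEq n] (C : Matrix n n 𝕜) (x : EuclideanSpace 𝕜 n) :
    star x ⬝ᵥ C *ᵥ x = ⟪x, toLpLin 2 2 C x⟫_𝕜 :=
  dotProduct_comm _ _

theorem cramped_numericalRange_subset_open_halfplane_general {n : ℕ}
    (C : Matrix (Fin n) (Fin n) ℂ) (hC : (0 : ℂ) ∉ numericalRange C) :
    ∃ θ : ℝ, ∀ x : EuclideanSpace ℂ (Fin n), ‖x‖ = 1 →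
      0 < (Complex.exp (-θ * Complex.I) * (star x ⬝ᵥ C.mulVec x)).re := by
  set T := toLpLin 2 2 C
  have hW : numericalRange C = T.numericalRange := by
    ext z
    simp [numericalRange, LinearMap.numericalRange, star_dotProduct_mulVec_eq_inner_toLpLin,
      eq_comm, T]
  obtain ⟨θ, hθ⟩ := T.convex_numericalRange.exists_forall_pos_re_exp_neg_mul
    T.isCompact_numericalRange.isClosed (hW ▸ hC)
  refine ⟨θ, fun x hx => ?_⟩
  rw [star_dotProduct_mulVec_eq_inner_toLpLin]
  exact hθ _ ⟨x, mem_sphere_zero_iff_norm.mpr hx, rfl⟩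

/-- The numerical range of a cramped matrix is contained in an open half-plane
whose boundary passes through the origin. -/
theorem cramped_numericalRange_subset_open_halfplane {n : ℕ} (hn : 1 ≤ n)
    (C : Matrix (Fin n) (Fin n) ℂ) (hC : (0 : ℂ) ∉ numericalRange C) :
    ∃ θ : ℝ, ∀ x : EuclideanSpace ℂ (Fin n), ‖x‖ = 1 →
      0 < (Complex.exp (-θ * Complex.I) * (star x ⬝ᵥ C.mulVec x)).re :=
  cramped_numericalRange_subset_open_halfplane_general C hC
end

section
/- If C ∈ Matrix (Fin n) (Fin n) ℂ has a sectoral decomposition C = Tᴴ * D * T with T invertible and D diagonal with all diagonal entries of modulus 1, then C is invertible and C⁻¹ * Cᴴ = T⁻¹ * D⁻¹ * D⁻¹ * T; in particular C⁻¹Cᴴ is similar to the diagonal unitary matrix D⁻², so every eigenvalue of C⁻¹Cᴴ has modulus 1. -/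
/-!
Since every diagonal entry of `D` has modulus one, `D` is unitary and `D⁻¹ = Dᴴ`. Expanding,
`(Tᴴ D T)⁻¹ (Tᴴ D T)ᴴ = T⁻¹ D⁻¹ (Tᴴ)⁻¹ Tᴴ Dᴴ T = T⁻¹ D⁻¹ D⁻¹ T`, which is similar to the unitary
matrix `D⁻¹ D⁻¹`; the spectrum of a unitary element of a C⋆-algebra lies on the unit circle.
-/

open Matrix

namespace Matrix

variable {n : Type*} [Fintype n] [DecidableEq n]

theorem IsDiag.mem_unitaryGroup {𝕜 : Type*} [RCLike 𝕜] {D : Matrix n n 𝕜} (hD : D.IsDiag)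
    (hDu : ∀ k, ‖D k k‖ = 1) : D ∈ unitaryGroup n 𝕜 := by
  rw [mem_unitaryGroup_iff, ← hD.diagonal_diag, star_eq_conjTranspose, diagonal_conjTranspose,
    diagonal_mul_diagonal, ← diagonal_one]
  congr 1
  ext k
  simp [RCLike.mul_conj, hDu]

theorem inv_eq_conjTranspose_of_mem_unitaryGroup {α : Type*} [CommRing α] [StarRing α]
    {U : Matrix n n α} (hU : U ∈ unitaryGroup n α) : U⁻¹ = Uᴴ :=
  inv_eq_left_inv (Unitary.star_mul_self_of_mem hU)

theorem inv_mul_conjTranspose_conjTranspose_mul_mul {α : Type*} [CommRing α] [StarRing α]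
    {T D : Matrix n n α} (hT : IsUnit T) :
    (Tᴴ * D * T)⁻¹ * (Tᴴ * D * T)ᴴ = T⁻¹ * D⁻¹ * Dᴴ * T := by
  rw [conjTranspose_mul, conjTranspose_mul, conjTranspose_conjTranspose, mul_inv_rev, mul_inv_rev]
  simp only [Matrix.mul_assoc]
  have hTH : IsUnit Tᴴ.det := (isUnit_iff_isUnit_det _).mp ((isUnit_conjTranspose T).mpr hT)
  rw [nonsing_inv_mul_cancel_left _ _ hTH]

-- The spectrum does not depend on a norm; the L2 operator norm only serves to make the matrices a
-- C⋆-algebra, where unitary elements have their spectrum on the unit circle.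
open scoped Matrix.Norms.L2Operator in
theorem norm_eq_one_of_mem_spectrum_inv_mul_mul {𝕜 : Type*} [RCLike 𝕜] {T U : Matrix n n 𝕜}
    (hT : IsUnit T) (hU : U ∈ unitaryGroup n 𝕜) {μ : 𝕜} (hμ : μ ∈ spectrum 𝕜 (T⁻¹ * U * T)) :
    ‖μ‖ = 1 := by
  obtain ⟨u, rfl⟩ := hT
  rw [← coe_units_inv, spectrum.units_conjugate'] at hμ
  exact spectrum.norm_eq_one_of_unitary hU hμ

end Matrix

/-- If `C = Tᴴ D T` is a sectoral decomposition, then `C` is invertible,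
`C⁻¹ * Cᴴ = T⁻¹ * D⁻¹ * D⁻¹ * T`, and every eigenvalue of `C⁻¹Cᴴ` has modulus 1. -/
theorem sectoral_decomposition_inv_mul_conjTranspose {n : ℕ}
    (C T D : Matrix (Fin n) (Fin n) ℂ)
    (hT : IsUnit T) (hD : D.IsDiag) (hDu : ∀ k, ‖D k k‖ = 1)
    (hC : C = T.conjTranspose * D * T) :
    IsUnit C ∧ C⁻¹ * C.conjTranspose = T⁻¹ * D⁻¹ * D⁻¹ * T ∧
      ∀ μ ∈ spectrum ℂ (C⁻¹ * C.conjTranspose), ‖μ‖ = 1 := by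
  have hDunitary : D ∈ unitaryGroup (Fin n) ℂ := hD.mem_unitaryGroup hDu
  have hDinv : D⁻¹ = Dᴴ := inv_eq_conjTranspose_of_mem_unitaryGroup hDunitary
  have hCC : C⁻¹ * Cᴴ = T⁻¹ * D⁻¹ * D⁻¹ * T := by
    rw [hC, inv_mul_conjTranspose_conjTranspose_mul_mul hT, ← hDinv]
  refine ⟨?_, hCC, fun μ hμ => ?_⟩
  · rw [hC]
    have hDunit : IsUnit D := Unitary.isUnit_coe (U := ⟨D, hDunitary⟩)
    exact (((isUnit_conjTranspose T).mpr hT).mul hDunit).mul hT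
  · have hD2 : D⁻¹ * D⁻¹ ∈ unitaryGroup (Fin n) ℂ := by
      rw [hDinv]
      exact mul_mem (Unitary.star_mem hDunitary) (Unitary.star_mem hDunitary)
    rw [hCC, Matrix.mul_assoc T⁻¹ D⁻¹ D⁻¹] at hμ
    exact norm_eq_one_of_mem_spectrum_inv_mul_mul hT hD2 hμ
end

section
/- A matrix C ∈ Matrix (Fin n) (Fin n) ℂ is strictly accretive, i.e., the Hermitian matrix C + Cᴴ is positive definite, if and only if C admits a sectoral decomposition C = Tᴴ * D * T in which T is invertible, D is diagonal with every diagonal entry of modulus 1, and every diagonal entry of D has strictly positive real part (equivalently, all phases of C lie in (−π/2, π/2)). -/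
open Matrix
open scoped ComplexOrder

/-!
Write `C + Cᴴ = Bᴴ * B` with `B` invertible. Then `K = B⁻¹ᴴ * C * B⁻¹` satisfies `K + Kᴴ = 1`,
so `K - 1/2` is skew-Hermitian and `K` is unitarily diagonalizable with eigenvalues `1/2 + iλ`,
`λ` real. Hence `C` is congruent to a diagonal matrix whose entries have positive real part, and
splitting each entry as `d = √‖d‖ * (d / ‖d‖) * √‖d‖` moves the moduli into the congruence.
Conversely, `C + Cᴴ = Tᴴ * (D + Dᴴ) * T`, and `D + Dᴴ` is diagonal with entries `2 * re (D k k)`.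
-/

namespace Matrix

lemma conjTranspose_mul_mul_add_conjTranspose {n α : Type*} [Fintype n] [CommSemiring α]
    [StarRing α] (T C : Matrix n n α) :
    Tᴴ * C * T + (Tᴴ * C * T)ᴴ = Tᴴ * (C + Cᴴ) * T := by
  simp only [conjTranspose_mul, conjTranspose_conjTranspose, mul_add, add_mul, mul_assoc]

variable {n 𝕜 : Type*} [DecidableEq n] [RCLike 𝕜]

lemma IsDiag.posDef_add_conjTranspose {D : Matrix n n 𝕜} (hD : D.IsDiag)
    (hre : ∀ i, 0 < RCLike.re (D i i)) : (D + Dᴴ).PosDef := by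
  rw [← hD.diagonal_diag, diagonal_conjTranspose, diagonal_add]
  refine PosDef.diagonal fun i => ?_
  rw [Pi.star_apply, diag_apply, RCLike.star_def, RCLike.add_conj]
  exact mul_pos two_pos (RCLike.ofReal_pos.mpr (hre i))

variable [Fintype n]

open scoped MatrixOrder in
lemma PosDef.exists_isUnit_eq_conjTranspose_mul_self {H : Matrix n n 𝕜} (hH : H.PosDef) :
    ∃ B : Matrix n n 𝕜, IsUnit B ∧ H = Bᴴ * B := by
  obtain ⟨B, rfl⟩ := CStarAlgebra.nonneg_iff_eq_star_mul_self.mp hH.posSemidef.nonneg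
  exact ⟨B, isUnit_of_mul_isUnit_right hH.isUnit, rfl⟩

lemma diagonal_eq_sqrt_norm_mul_diagonal_div_norm_mul (d : n → 𝕜) :
    diagonal d = diagonal (fun i => (√‖d i‖ : 𝕜)) * diagonal (fun i => d i / ‖d i‖) *
      diagonal (fun i => (√‖d i‖ : 𝕜)) := by
  rw [diagonal_mul_diagonal, diagonal_mul_diagonal]
  congr 1
  funext i
  rw [mul_comm, ← mul_assoc, ← RCLike.ofReal_mul, Real.mul_self_sqrt (norm_nonneg _)]
  rcases eq_or_ne (d i) 0 with h | h
  · simp [h]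
  · exact (mul_div_cancel₀ _ (by simpa using h)).symm

lemma exists_sectoral_decomposition_of_eq_conjTranspose_mul_diagonal_mul {C P : Matrix n n 𝕜}
    {d : n → 𝕜} (hP : IsUnit P) (hd : ∀ i, 0 < RCLike.re (d i))
    (hC : C = Pᴴ * diagonal d * P) :
    ∃ T D : Matrix n n 𝕜, IsUnit T ∧ D.IsDiag ∧ (∀ k, ‖D k k‖ = 1) ∧
      (∀ k, 0 < RCLike.re (D k k)) ∧ C = Tᴴ * D * T := by
  have hd0 : ∀ i, d i ≠ 0 := fun i h => by simpa [h] using hd i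
  set S := diagonal (fun i => (√‖d i‖ : 𝕜))
  have hS : IsUnit S := isUnit_diagonal.mpr <| Pi.isUnit_iff.mpr fun i =>
    (RCLike.ofReal_ne_zero.mpr (Real.sqrt_ne_zero'.mpr (norm_pos_iff.mpr (hd0 i)))).isUnit
  refine ⟨S * P, diagonal (fun i => d i / ‖d i‖), hS.mul hP, isDiag_diagonal _,
    fun k => by simp [hd0 k], fun k => ?_, ?_⟩
  · rw [diagonal_apply_eq, RCLike.div_re_ofReal]
    exact div_pos (hd k) (norm_pos_iff.mpr (hd0 k))
  · rw [hC, diagonal_eq_sqrt_norm_mul_diagonal_div_norm_mul d, conjTranspose_mul,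
      diagonal_conjTranspose]
    simp only [S, mul_assoc, Pi.star_def, RCLike.star_def, RCLike.conj_ofReal]

lemma exists_unitary_eq_mul_diagonal_mul_star_of_add_conjTranspose_eq_one {K : Matrix n n ℂ}
    (hK : K + Kᴴ = 1) : ∃ U : unitaryGroup n ℂ, ∃ d : n → ℂ,
      (∀ i, (d i).re = 2⁻¹) ∧ K = U * diagonal d * star (U : Matrix n n ℂ) := by
  set A := Complex.I • ((2⁻¹ : ℂ) • 1 - K)
  have hA : A.IsHermitian := by
    rw [IsHermitian, conjTranspose_smul, conjTranspose_sub, conjTranspose_smul, conjTranspose_one,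
      eq_sub_of_add_eq' hK, star_inv₀, star_ofNat, Complex.star_def, Complex.conj_I]
    module
  have hKA : K = (2⁻¹ : ℂ) • 1 + Complex.I • A := by
    rw [smul_smul, Complex.I_mul_I]
    module
  refine ⟨hA.eigenvectorUnitary, fun i => 2⁻¹ + Complex.I * hA.eigenvalues i, fun i => by simp, ?_⟩
  have hd : diagonal (fun i => 2⁻¹ + Complex.I * hA.eigenvalues i) =
      (2⁻¹ : ℂ) • 1 + Complex.I • diagonal (RCLike.ofReal ∘ hA.eigenvalues) := by
    rw [← diagonal_one, ← diagonal_smul, ← diagonal_smul, diagonal_add]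
    congr 1
    funext i
    simp
  rw [hd, hKA]
  refine Eq.trans ?_ (Unitary.conjStarAlgAut_apply (S := ℂ) hA.eigenvectorUnitary _)
  rw [map_add, map_smul, map_smul, map_one, ← hA.spectral_theorem]

lemma exists_eq_conjTranspose_mul_diagonal_mul_of_posDef_add_conjTranspose {C : Matrix n n ℂ}
    (hC : (C + Cᴴ).PosDef) : ∃ P : Matrix n n ℂ, ∃ d : n → ℂ,
      IsUnit P ∧ (∀ i, (d i).re = 2⁻¹) ∧ C = Pᴴ * diagonal d * P := by
  obtain ⟨B, hB, hBB⟩ := hC.exists_isUnit_eq_conjTranspose_mul_self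
  have hBinv : B * B⁻¹ = 1 := mul_nonsing_inv B ((isUnit_iff_isUnit_det B).mp hB)
  have hinvB : B⁻¹ * B = 1 := nonsing_inv_mul B ((isUnit_iff_isUnit_det B).mp hB)
  set K := (B⁻¹)ᴴ * C * B⁻¹
  have hK : K + Kᴴ = 1 := by
    rw [conjTranspose_mul_mul_add_conjTranspose, hBB, ← mul_assoc, ← conjTranspose_mul, hBinv,
      conjTranspose_one, one_mul, hBinv]
  have hCK : C = Bᴴ * K * B := by
    rw [← mul_assoc, ← mul_assoc, ← conjTranspose_mul, hinvB, conjTranspose_one, one_mul,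
      mul_assoc, hinvB, mul_one]
  obtain ⟨U, d, hd, hKU⟩ := exists_unitary_eq_mul_diagonal_mul_star_of_add_conjTranspose_eq_one hK
  refine ⟨star (U : Matrix n n ℂ) * B, d, Unitary.isUnit_coe.star.mul hB, hd, ?_⟩
  rw [hCK, hKU, conjTranspose_mul, star_eq_conjTranspose, conjTranspose_conjTranspose]
  simp only [mul_assoc]

end Matrix

/-- A matrix is strictly accretive (i.e. `C + Cᴴ` is positive definite) iff it admits a
sectoral decomposition whose diagonal unitary factor has diagonal entries with strictly
positive real part. -/
theorem strictly_accretive_iff_sectoral_decomposition {n : ℕ}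
    (C : Matrix (Fin n) (Fin n) ℂ) :
    (C + C.conjTranspose).PosDef ↔
      ∃ T D : Matrix (Fin n) (Fin n) ℂ, IsUnit T ∧ D.IsDiag ∧
        (∀ k, ‖D k k‖ = 1) ∧ (∀ k, 0 < (D k k).re) ∧
        C = T.conjTranspose * D * T := by
  constructor
  · intro hC
    obtain ⟨P, d, hP, hd, hCP⟩ :=
      exists_eq_conjTranspose_mul_diagonal_mul_of_posDef_add_conjTranspose hC
    exact exists_sectoral_decomposition_of_eq_conjTranspose_mul_diagonal_mul hP
      (fun i => by simp [hd]) hCP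
  · rintro ⟨T, D, hT, hD, -, hre, rfl⟩
    rw [conjTranspose_mul_mul_add_conjTranspose]
    exact (IsUnit.posDef_star_left_conjugate_iff hT).mpr (hD.posDef_add_conjTranspose hre)
end

section
/- Let C ∈ Matrix (Fin n) (Fin n) ℂ have a sectoral decomposition C = Tᴴ * D * T where T is invertible, D is diagonal with D k k = Complex.exp(φ k * Complex.I), and all φ k lie in the open interval (θ, θ + π) for some θ ∈ ℝ. Then for every x ∈ EuclideanSpace ℂ (Fin n) with ‖x‖ = 1, the number z = star x ⬝ᵥ C.mulVec x is nonzero and the unique a ∈ (θ, θ + π) with z = ‖z‖ * Complex.exp(a * Complex.I) satisfies (min over k of φ k) ≤ a ≤ (max over k of φ k); moreover both bounds are attained: there exist unit vectors x and y for which the corresponding angle equals max_k φ k and min_k φ k respectively. -/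
open Matrix
open scoped Real

/-!
With `w = T x`, the quadratic form is `star x ⬝ᵥ C *ᵥ x = ∑ k, |w k|² e^{i φ k}`, a nonnegative
combination, not all zero, of unit vectors whose angles lie in `(θ, θ + π)`. Rotating by the
bisector `θ + π / 2` moves the sum into the open right half-plane, which yields a unique angle in
`(θ, θ + π)`. Rotating by `max φ` (resp. `min φ`) moves every summand into the closed lower
(resp. upper) half-plane, which traps that angle between the extreme phases. Taking `x` along
`T⁻¹ e_j` collapses the sum to a positive multiple of `e^{i φ j}`, so the extreme phases are
attained.
-/

namespace Complex

lemma exp_neg_mul_I_mul_exp_mul_I (t a : ℝ) :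
    exp (-(t : ℂ) * I) * exp (a * I) = exp (↑(a - t) * I) := by
  rw [← exp_add]; push_cast; ring_nf

lemma re_exp_neg_mul_I_mul_ofReal_mul_exp_mul_I (t r a : ℝ) :
    (exp (-(t : ℂ) * I) * (r * exp (a * I))).re = r * Real.cos (a - t) := by
  rw [mul_left_comm, exp_neg_mul_I_mul_exp_mul_I, re_ofReal_mul, exp_ofReal_mul_I_re]

lemma im_exp_neg_mul_I_mul_ofReal_mul_exp_mul_I (t r a : ℝ) :
    (exp (-(t : ℂ) * I) * (r * exp (a * I))).im = r * Real.sin (a - t) := by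
  rw [mul_left_comm, exp_neg_mul_I_mul_exp_mul_I, im_ofReal_mul, exp_ofReal_mul_I_im]

lemma eq_norm_mul_exp_mul_I_of_eq_ofReal_mul {z : ℂ} {r a : ℝ} (hr : 0 ≤ r)
    (hz : z = r * exp (a * I)) : z = ‖z‖ * exp (a * I) := by
  rw [hz, norm_mul, norm_exp_ofReal_mul_I, mul_one, Complex.norm_of_nonneg hr]

lemma existsUnique_angle_mem_Ioo_of_re_pos {z : ℂ} {θ : ℝ}
    (hz : 0 < (exp (-↑(θ + π / 2) * I) * z).re) :
    ∃! a : ℝ, a ∈ Set.Ioo θ (θ + π) ∧ z = ‖z‖ * exp (a * I) := by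
  set t := θ + π / 2 with ht
  set w := exp (-(t : ℂ) * I) * z with hw_def
  have hw : |arg w| < π / 2 := abs_arg_lt_pi_div_two_iff.mpr (Or.inl hz)
  have hz0 : z ≠ 0 := by rintro rfl; simp [w] at hz
  have hnorm : ‖w‖ = ‖z‖ := by simp [w, norm_exp]
  refine ⟨arg w + t, ⟨?_, ?_⟩, ?_⟩
  · rw [abs_lt] at hw; constructor <;> linarith
  · have hzw : z = exp (t * I) * w := by rw [hw_def, ← mul_assoc, ← exp_add]; simp
    conv_lhs => rw [hzw, ← norm_mul_exp_arg_mul_I w]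
    rw [hnorm, mul_left_comm, ← exp_add]; push_cast; ring_nf
  · rintro b ⟨hb, hzb⟩
    have hwb : w = ‖z‖ * exp (↑(b - t) * I) := by
      calc w = exp (-(t : ℂ) * I) * (‖z‖ * exp (b * I)) := by rw [← hzb]
        _ = ‖z‖ * exp (↑(b - t) * I) := by rw [mul_left_comm, exp_neg_mul_I_mul_exp_mul_I]
    have : arg w = b - t := by
      rw [hwb, arg_real_mul _ (norm_pos_iff.2 hz0), arg_exp_mul_I, toIocMod_eq_self]
      constructor <;> linarith [hb.1, hb.2, Real.pi_pos]
    linarith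

section PhaseSums

variable {ι : Type*} [Fintype ι] {θ : ℝ} {c φ : ι → ℝ}

lemma re_exp_neg_mul_I_mul_sum (t : ℝ) :
    (exp (-(t : ℂ) * I) * ∑ k, (c k : ℂ) * exp (φ k * I)).re
      = ∑ k, c k * Real.cos (φ k - t) := by
  simp only [Finset.mul_sum, re_sum, re_exp_neg_mul_I_mul_ofReal_mul_exp_mul_I]

lemma im_exp_neg_mul_I_mul_sum (t : ℝ) :
    (exp (-(t : ℂ) * I) * ∑ k, (c k : ℂ) * exp (φ k * I)).im
      = ∑ k, c k * Real.sin (φ k - t) := by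
  simp only [Finset.mul_sum, im_sum, im_exp_neg_mul_I_mul_ofReal_mul_exp_mul_I]

lemma re_exp_neg_mul_I_mul_sum_pos (hφ : ∀ k, φ k ∈ Set.Ioo θ (θ + π)) (hc : 0 ≤ c)
    (hc₀ : ∃ k, 0 < c k) :
    0 < (exp (-↑(θ + π / 2) * I) * ∑ k, (c k : ℂ) * exp (φ k * I)).re := by
  have hcos (k : ι) : 0 < Real.cos (φ k - (θ + π / 2)) :=
    Real.cos_pos_of_mem_Ioo ⟨by linarith [(hφ k).1], by linarith [(hφ k).2]⟩
  obtain ⟨k₀, hk₀⟩ := hc₀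
  rw [re_exp_neg_mul_I_mul_sum]
  exact Finset.sum_pos' (fun k _ => mul_nonneg (hc k) (hcos k).le)
    ⟨k₀, Finset.mem_univ _, mul_pos hk₀ (hcos k₀)⟩

variable {z : ℂ} {a : ℝ}

lemma le_ciSup_of_eq_norm_mul_exp_mul_I [Nonempty ι] (hφ : ∀ k, φ k ∈ Set.Ioo θ (θ + π))
    (hc : 0 ≤ c) (hz : z = ∑ k, (c k : ℂ) * exp (φ k * I)) (hz₀ : z ≠ 0)
    (ha : a ∈ Set.Ioo θ (θ + π)) (hza : z = ‖z‖ * exp (a * I)) : a ≤ ⨆ k, φ k := by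
  set M := ⨆ k, φ k
  obtain ⟨j⟩ := ‹Nonempty ι›
  have hM (k : ι) : φ k ≤ M := le_ciSup (Set.finite_range φ).bddAbove k
  have hθM : θ < M := (hφ j).1.trans_le (hM j)
  by_contra! haM
  have him_nonpos : (exp (-(M : ℂ) * I) * z).im ≤ 0 := by
    rw [hz, im_exp_neg_mul_I_mul_sum]
    exact Finset.sum_nonpos fun k _ => mul_nonpos_of_nonneg_of_nonpos (hc k)
      (Real.sin_nonpos_of_nonpos_of_neg_pi_le (by linarith [hM k])
        (by linarith [(hφ k).1, ha.2]))
  have him_pos : 0 < (exp (-(M : ℂ) * I) * z).im := by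
    rw [hza, im_exp_neg_mul_I_mul_ofReal_mul_exp_mul_I]
    exact mul_pos (norm_pos_iff.2 hz₀)
      (Real.sin_pos_of_pos_of_lt_pi (by linarith) (by linarith [ha.2]))
  linarith

lemma ciInf_le_of_eq_norm_mul_exp_mul_I [Nonempty ι] (hφ : ∀ k, φ k ∈ Set.Ioo θ (θ + π))
    (hc : 0 ≤ c) (hz : z = ∑ k, (c k : ℂ) * exp (φ k * I)) (hz₀ : z ≠ 0)
    (ha : a ∈ Set.Ioo θ (θ + π)) (hza : z = ‖z‖ * exp (a * I)) : ⨅ k, φ k ≤ a := by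
  set m := ⨅ k, φ k
  obtain ⟨j⟩ := ‹Nonempty ι›
  have hm (k : ι) : m ≤ φ k := ciInf_le (Set.finite_range φ).bddBelow k
  have hmθ : m < θ + π := (hm j).trans_lt (hφ j).2
  by_contra! ham
  have him_nonneg : 0 ≤ (exp (-(m : ℂ) * I) * z).im := by
    rw [hz, im_exp_neg_mul_I_mul_sum]
    exact Finset.sum_nonneg fun k _ => mul_nonneg (hc k)
      (Real.sin_nonneg_of_nonneg_of_le_pi (by linarith [hm k])
        (by linarith [(hφ k).2, ha.1]))
  have him_neg : (exp (-(m : ℂ) * I) * z).im < 0 := by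
    rw [hza, im_exp_neg_mul_I_mul_ofReal_mul_exp_mul_I]
    exact mul_neg_of_pos_of_neg (norm_pos_iff.2 hz₀)
      (Real.sin_neg_of_neg_of_neg_pi_lt (by linarith) (by linarith [ha.1]))
  linarith

end PhaseSums

end Complex

namespace Matrix

variable {ι : Type*} [Fintype ι] [DecidableEq ι] {D : Matrix ι ι ℂ}

lemma IsDiag.star_dotProduct_conjTranspose_mul_mul_mulVec (hD : D.IsDiag)
    (T : Matrix ι ι ℂ) (x : ι → ℂ) :
    star x ⬝ᵥ (Tᴴ * D * T) *ᵥ x = ∑ k, (Complex.normSq ((T *ᵥ x) k) : ℂ) * D k k := by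
  conv_lhs => rw [← hD.diagonal_diag, ← mulVec_mulVec, ← mulVec_mulVec, dotProduct_mulVec,
    ← star_mulVec]
  refine Finset.sum_congr rfl fun k _ => ?_
  rw [mulVec_diagonal, Pi.star_apply, Complex.star_def, Complex.normSq_eq_conj_mul_self, diag_apply]
  ring

lemma IsDiag.exists_norm_eq_one_star_dotProduct_mulVec_eq_mul (hD : D.IsDiag)
    {T : Matrix ι ι ℂ} (hT : IsUnit T) (j : ι) :
    ∃ x : EuclideanSpace ℂ ι, ‖x‖ = 1 ∧
      ∃ r : ℝ, 0 ≤ r ∧ star x ⬝ᵥ (Tᴴ * D * T) *ᵥ x = r * D j j := by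
  obtain ⟨v, hv⟩ := mulVec_surjective_iff_isUnit.2 hT (Pi.single j 1)
  have hv₀ : (WithLp.toLp 2 v : EuclideanSpace ℂ ι) ≠ 0 := by
    rintro h
    have : v = 0 := congrArg WithLp.ofLp h
    simpa [this] using congrFun hv j
  set u : EuclideanSpace ℂ ι := WithLp.toLp 2 v
  set c : ℂ := ((‖u‖⁻¹ : ℝ) : ℂ)
  have hTx : T *ᵥ (c • u : EuclideanSpace ℂ ι) = c • Pi.single j 1 := by
    rw [← hv, ← mulVec_smul]; rfl
  have hu : ‖c • u‖ = 1 := by simp [c, norm_smul, hv₀]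
  refine ⟨c • u, hu, Complex.normSq c, Complex.normSq_nonneg c, ?_⟩
  rw [hD.star_dotProduct_conjTranspose_mul_mul_mulVec, hTx, Finset.sum_eq_single j]
  · simp
  · intro k _ hk
    simp [Pi.single_eq_of_ne hk]
  · simp

end Matrix

/-- The phases of a sectorally decomposed matrix bound the angle of every point of its
numerical range, and both bounds are attained. -/
theorem numericalRange_angle_bounds_of_sectoral_decomposition {n : ℕ} (hn : 0 < n)
    (θ : ℝ) (φ : Fin n → ℝ) (hφ : ∀ k, φ k ∈ Set.Ioo θ (θ + π))
    (C T D : Matrix (Fin n) (Fin n) ℂ)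
    (hT : IsUnit T) (hD : D.IsDiag)
    (hDk : ∀ k, D k k = Complex.exp ((φ k : ℂ) * Complex.I))
    (hC : C = T.conjTranspose * D * T) :
    (∀ x : EuclideanSpace ℂ (Fin n), ‖x‖ = 1 →
      star x ⬝ᵥ C.mulVec x ≠ 0 ∧
      (∃! a : ℝ, a ∈ Set.Ioo θ (θ + π) ∧
        star x ⬝ᵥ C.mulVec x
          = (‖star x ⬝ᵥ C.mulVec x‖ : ℂ) * Complex.exp ((a : ℂ) * Complex.I)) ∧
      (∀ a ∈ Set.Ioo θ (θ + π),
        star x ⬝ᵥ C.mulVec x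
            = (‖star x ⬝ᵥ C.mulVec x‖ : ℂ) * Complex.exp ((a : ℂ) * Complex.I) →
          (⨅ k, φ k) ≤ a ∧ a ≤ ⨆ k, φ k)) ∧
    (∃ x : EuclideanSpace ℂ (Fin n), ‖x‖ = 1 ∧
      star x ⬝ᵥ C.mulVec x
        = (‖star x ⬝ᵥ C.mulVec x‖ : ℂ) * Complex.exp (((⨆ k, φ k : ℝ) : ℂ) * Complex.I)) ∧
    (∃ y : EuclideanSpace ℂ (Fin n), ‖y‖ = 1 ∧
      star y ⬝ᵥ C.mulVec y
        = (‖star y ⬝ᵥ C.mulVec y‖ : ℂ) * Complex.exp (((⨅ k, φ k : ℝ) : ℂ) * Complex.I)) := by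
  have : Nonempty (Fin n) := ⟨⟨0, hn⟩⟩
  have hz (x : Fin n → ℂ) : star x ⬝ᵥ C *ᵥ x
      = ∑ k, (Complex.normSq ((T *ᵥ x) k) : ℂ) * Complex.exp (φ k * Complex.I) := by
    simp only [hC, hD.star_dotProduct_conjTranspose_mul_mul_mulVec, hDk]
  have hc (x : Fin n → ℂ) : 0 ≤ fun k => Complex.normSq ((T *ᵥ x) k) :=
    fun k => Complex.normSq_nonneg _
  have hphase (j : Fin n) : ∃ x : EuclideanSpace ℂ (Fin n), ‖x‖ = 1 ∧
      star x ⬝ᵥ C *ᵥ x = ‖star x ⬝ᵥ C *ᵥ x‖ * Complex.exp (φ j * Complex.I) := by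
    obtain ⟨x, hx, r, hr, hxr⟩ := hD.exists_norm_eq_one_star_dotProduct_mulVec_eq_mul hT j
    exact ⟨x, hx, Complex.eq_norm_mul_exp_mul_I_of_eq_ofReal_mul hr (by rw [hC, hxr, hDk])⟩
  refine ⟨fun x hx => ?_, ?_, ?_⟩
  · have hx₀ : (x : Fin n → ℂ) ≠ 0 := fun h => by simp [(WithLp.ofLp_eq_zero 2).1 h] at hx
    have hTx : T *ᵥ x ≠ 0 := by simpa using (mulVec_injective_iff_isUnit.2 hT).ne hx₀
    obtain ⟨k, hk⟩ := Function.ne_iff.1 hTx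
    have hre := Complex.re_exp_neg_mul_I_mul_sum_pos hφ (hc x) ⟨k, Complex.normSq_pos.2 hk⟩
    rw [← hz] at hre
    have hz₀ : star x ⬝ᵥ C *ᵥ x ≠ 0 := fun h => by simp [h] at hre
    exact ⟨hz₀, Complex.existsUnique_angle_mem_Ioo_of_re_pos hre, fun a ha hza =>
      ⟨Complex.ciInf_le_of_eq_norm_mul_exp_mul_I hφ (hc x) (hz x) hz₀ ha hza,
        Complex.le_ciSup_of_eq_norm_mul_exp_mul_I hφ (hc x) (hz x) hz₀ ha hza⟩⟩
  · obtain ⟨j, hj⟩ := exists_eq_ciSup_of_finite (f := φ)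
    exact hj ▸ hphase j
  · obtain ⟨j, hj⟩ := exists_eq_ciInf_of_finite (f := φ)
    exact hj ▸ hphase j
end

section
/- Let α₁ ≤ β₁ and α₂ ≤ β₂ be reals with β₁ − α₁ < π and β₂ − α₂ < π, and let A, B ∈ Matrix (Fin n) (Fin n) ℂ satisfy star x ⬝ᵥ A.mulVec x ∈ S[α₁,β₁] and star x ⬝ᵥ B.mulVec x ∈ S[α₂,β₂] for every unit vector x ∈ EuclideanSpace ℂ (Fin n). Then every eigenvalue λ ∈ spectrum ℂ (A * B) is nonzero and lies in the sector S[α₁ + α₂, β₁ + β₂]. -/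
/-!
If `(A * B) v = λ v` with `v ≠ 0`, put `b = v* B v ∈ S[α₂, β₂]` (so `B v ≠ 0`) and
`a = (B v)* A (B v) ∈ S[α₁, β₁]`. Then `a = λ b̄`, hence `λ = a b / |b|²`, whose phase is the sum
of the phases of `a` and `b`.
-/

open Matrix
open scoped Real

/-- The sector of complex numbers with phase in `[α, β]`. -/
def sector (α β : ℝ) : Set ℂ :=
  {z : ℂ | ∃ r > (0 : ℝ), ∃ θ ∈ Set.Icc α β, z = (r : ℂ) * Complex.exp ((θ : ℂ) * Complex.I)}

lemma ne_zero_of_mem_sector {α β : ℝ} {z : ℂ} (h : z ∈ sector α β) : z ≠ 0 := by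
  obtain ⟨r, hr, θ, -, rfl⟩ := h
  exact mul_ne_zero (Complex.ofReal_ne_zero.mpr hr.ne') (Complex.exp_ne_zero _)

lemma ofReal_mul_mem_sector {α β r : ℝ} {z : ℂ} (hr : 0 < r) (h : z ∈ sector α β) :
    (r : ℂ) * z ∈ sector α β := by
  obtain ⟨s, hs, θ, hθ, rfl⟩ := h
  exact ⟨r * s, mul_pos hr hs, θ, hθ, by push_cast; ring⟩

lemma mul_mem_sector {α₁ β₁ α₂ β₂ : ℝ} {z w : ℂ} (hz : z ∈ sector α₁ β₁)
    (hw : w ∈ sector α₂ β₂) : z * w ∈ sector (α₁ + α₂) (β₁ + β₂) := by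
  obtain ⟨r, hr, θ, hθ, rfl⟩ := hz
  obtain ⟨s, hs, φ, hφ, rfl⟩ := hw
  refine ⟨r * s, mul_pos hr hs, θ + φ, ⟨add_le_add hθ.1 hφ.1, add_le_add hθ.2 hφ.2⟩, ?_⟩
  push_cast
  rw [add_mul, Complex.exp_add]
  ring

lemma mem_sector_add_of_mul_star_mem {α₁ β₁ α₂ β₂ : ℝ} {z w : ℂ}
    (hz : z * star w ∈ sector α₁ β₁) (hw : w ∈ sector α₂ β₂) :
    z ∈ sector (α₁ + α₂) (β₁ + β₂) := by
  have hpos : 0 < Complex.normSq w := Complex.normSq_pos.mpr (ne_zero_of_mem_sector hw)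
  have hz_eq : z = ((Complex.normSq w)⁻¹ : ℝ) * (z * star w * w) := by
    have : (Complex.normSq w : ℂ) ≠ 0 := Complex.ofReal_ne_zero.mpr hpos.ne'
    rw [mul_assoc, mul_comm _ w, Complex.star_def, Complex.mul_conj, Complex.ofReal_inv]
    field_simp
  rw [hz_eq]
  exact ofReal_mul_mem_sector (inv_pos.mpr hpos) (mul_mem_sector hz hw)

lemma Matrix.star_dotProduct_mulVec_mem_sector {ι : Type*} [Fintype ι] {α β : ℝ}
    {M : Matrix ι ι ℂ} (hM : ∀ x : EuclideanSpace ℂ ι, ‖x‖ = 1 → star x ⬝ᵥ M *ᵥ x ∈ sector α β)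
    {v : ι → ℂ} (hv : v ≠ 0) : star v ⬝ᵥ M *ᵥ v ∈ sector α β := by
  set u : EuclideanSpace ℂ ι := WithLp.toLp 2 v
  have hu : u ≠ 0 := fun h => hv (congrArg WithLp.ofLp h)
  have hunit := hM ((‖u‖⁻¹ : ℝ) • u) (norm_smul_inv_norm hu)
  simp only [WithLp.ofLp_smul] at hunit
  rw [star_smul, mulVec_smul, smul_dotProduct, dotProduct_smul] at hunit
  convert ofReal_mul_mem_sector (pow_pos (norm_pos_iff.mpr hu) 2) hunit using 1
  have : (‖u‖ : ℂ) ≠ 0 := by simpa using hu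
  simp only [star_trivial, Complex.real_smul, Complex.ofReal_pow, Complex.ofReal_inv]
  field_simp
  rfl

lemma Matrix.exists_mulVec_eq_smul_of_mem_spectrum {ι K : Type*} [Fintype ι] [DecidableEq ι]
    [Field K] {M : Matrix ι ι K} {μ : K} (hμ : μ ∈ spectrum K M) : ∃ v ≠ 0, M *ᵥ v = μ • v := by
  rw [← Matrix.spectrum_toLin', ← Module.End.hasEigenvalue_iff_mem_spectrum] at hμ
  obtain ⟨v, hv⟩ := hμ.exists_hasEigenvector
  exact ⟨v, hv.2, hv.apply_eq_smul⟩

lemma Matrix.star_mulVec_dotProduct_mulVec_of_mul_mulVec_eq_smul {ι R : Type*} [Fintype ι]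
    [CommRing R] [StarRing R] {A B : Matrix ι ι R} {v : ι → R} {μ : R} (hv : (A * B) *ᵥ v = μ • v) :
    star (B *ᵥ v) ⬝ᵥ A *ᵥ (B *ᵥ v) = μ * star (star v ⬝ᵥ B *ᵥ v) := by
  rw [mulVec_mulVec, hv, dotProduct_smul, smul_eq_mul, star_dotProduct]

theorem spectrum_mul_mem_sector_general {n : ℕ} (α₁ β₁ α₂ β₂ : ℝ)
    (A B : Matrix (Fin n) (Fin n) ℂ)
    (hA : ∀ x : EuclideanSpace ℂ (Fin n), ‖x‖ = 1 → star x ⬝ᵥ A.mulVec x ∈ sector α₁ β₁)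
    (hB : ∀ x : EuclideanSpace ℂ (Fin n), ‖x‖ = 1 → star x ⬝ᵥ B.mulVec x ∈ sector α₂ β₂) :
    ∀ lam ∈ spectrum ℂ (A * B), lam ≠ 0 ∧ lam ∈ sector (α₁ + α₂) (β₁ + β₂) := by
  intro lam hlam
  obtain ⟨v, hv, hABv⟩ := exists_mulVec_eq_smul_of_mem_spectrum hlam
  have hb := star_dotProduct_mulVec_mem_sector hB hv
  have hBv : B *ᵥ v ≠ 0 := fun h => ne_zero_of_mem_sector hb (by rw [h, dotProduct_zero])
  have ha := star_dotProduct_mulVec_mem_sector hA hBv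
  rw [star_mulVec_dotProduct_mulVec_of_mul_mulVec_eq_smul hABv] at ha
  exact ⟨left_ne_zero_of_mul (ne_zero_of_mem_sector ha), mem_sector_add_of_mul_star_mem ha hb⟩

/-- If the numerical ranges of `A` and `B` lie in sectors of angular width less than `π`,
then every eigenvalue of `A * B` is nonzero and lies in the sum sector. -/
theorem spectrum_mul_mem_sector {n : ℕ} (α₁ β₁ α₂ β₂ : ℝ)
    (h₁ : α₁ ≤ β₁) (h₂ : α₂ ≤ β₂) (hw₁ : β₁ - α₁ < π) (hw₂ : β₂ - α₂ < π)
    (A B : Matrix (Fin n) (Fin n) ℂ)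
    (hA : ∀ x : EuclideanSpace ℂ (Fin n), ‖x‖ = 1 → star x ⬝ᵥ A.mulVec x ∈ sector α₁ β₁)
    (hB : ∀ x : EuclideanSpace ℂ (Fin n), ‖x‖ = 1 → star x ⬝ᵥ B.mulVec x ∈ sector α₂ β₂) :
    ∀ lam ∈ spectrum ℂ (A * B), lam ≠ 0 ∧ lam ∈ sector (α₁ + α₂) (β₁ + β₂) :=
  spectrum_mul_mem_sector_general α₁ β₁ α₂ β₂ A B hA hB
end

section
/- Homotopy nonvanishing on the closed right half-plane: let f : ℝ → ℂ → ℂ be such that (τ, s) ↦ f τ s is continuous on Set.Icc (0:ℝ) 1 ×ˢ {s : ℂ | 0 ≤ s.re}, and for each τ ∈ Set.Icc 0 1 the map f τ is differentiable (ℂ-differentiable) on {s | 0 < s.re}. Assume: (i) there exist R > 0 and c > 0 with ‖f τ s‖ ≥ c whenever τ ∈ Set.Icc 0 1, 0 ≤ s.re, and ‖s‖ ≥ R; (ii) f τ (ω * Complex.I) ≠ 0 for all τ ∈ Set.Icc 0 1 and ω ∈ ℝ; (iii) f 0 s ≠ 0 for all s with 0 ≤ s.re. Then f 1 s ≠ 0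 for all s with 0 ≤ s.re. -/
set_option maxHeartbeats 1000000 in
/-- Homotopy nonvanishing on the closed right half-plane: a continuously parametrized
family of functions, holomorphic on the open right half-plane, bounded away from zero
near infinity, nonvanishing on the imaginary axis and at the initial parameter, is also
nonvanishing on the closed right half-plane at the final parameter. -/
theorem homotopy_nonvanishing_closed_right_halfplane (f : ℝ → ℂ → ℂ)
    (hcont : ContinuousOn (fun p : ℝ × ℂ => f p.1 p.2)
      (Set.Icc (0 : ℝ) 1 ×ˢ {s : ℂ | 0 ≤ s.re}))
    (hdiff : ∀ τ ∈ Set.Icc (0 : ℝ) 1, DifferentiableOn ℂ (f τ) {s : ℂ | 0 < s.re})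
    (hinf : ∃ R > (0 : ℝ), ∃ c > (0 : ℝ), ∀ τ ∈ Set.Icc (0 : ℝ) 1, ∀ s : ℂ,
      0 ≤ s.re → R ≤ ‖s‖ → c ≤ ‖f τ s‖)
    (haxis : ∀ τ ∈ Set.Icc (0 : ℝ) 1, ∀ ω : ℝ, f τ ((ω : ℂ) * Complex.I) ≠ 0)
    (hinit : ∀ s : ℂ, 0 ≤ s.re → f 0 s ≠ 0) :
    ∀ s : ℂ, 0 ≤ s.re → f 1 s ≠ 0 := by
  classical
  obtain ⟨R, hR, c, hc, hinf⟩ := hinf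
  have hRHPc : IsClosed {s : ℂ | 0 ≤ s.re} := isClosed_le continuous_const Complex.continuous_re
  have hORHP : IsOpen {s : ℂ | 0 < s.re} := isOpen_lt continuous_const Complex.continuous_re
  set K : Set ℂ := Metric.closedBall 0 R ∩ {s : ℂ | 0 ≤ s.re} with hK
  have hKcomp : IsCompact K := (isCompact_closedBall 0 R).inter_right hRHPc
  have hKsub : Set.Icc (0:ℝ) 1 ×ˢ K ⊆ Set.Icc (0:ℝ) 1 ×ˢ {s : ℂ | 0 ≤ s.re} :=
    Set.prod_mono_right Set.inter_subset_right
  have hUC := (isCompact_Icc.prod hKcomp).uniformContinuousOn_of_continuous (hcont.mono hKsub)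
  rw [Metric.uniformContinuousOn_iff] at hUC
  -- any zero in the closed half-plane is interior and inside the ball of radius R
  have hzloc : ∀ τ ∈ Set.Icc (0:ℝ) 1, ∀ s : ℂ, 0 ≤ s.re → f τ s = 0 → 0 < s.re ∧ ‖s‖ < R := by
    intro τ hτ s hs hzero
    constructor
    · rcases hs.lt_or_eq with h | h
      · exact h
      · exfalso
        have hse : s = (s.im : ℂ) * Complex.I := by
          apply Complex.ext <;> simp [← h]
        exact haxis τ hτ s.im (hse ▸ hzero)
    · by_contra h
      push_neg at h
      have := hinf τ hτ s hs h
      rw [hzero] at this; simp at this; linarith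
  -- continuity of slices
  have hslice : ∀ τ ∈ Set.Icc (0:ℝ) 1, ContinuousOn (f τ) {s : ℂ | 0 ≤ s.re} := by
    intro τ hτ
    have : ContinuousOn (fun s : ℂ => (fun p : ℝ × ℂ => f p.1 p.2) (τ, s)) {s : ℂ | 0 ≤ s.re} :=
      hcont.comp (Continuous.continuousOn (continuous_const.prodMk continuous_id))
        (fun s hs => ⟨hτ, hs⟩)
    exact this
  set P : ℝ → Prop := fun τ => ∀ s : ℂ, 0 ≤ s.re → f τ s ≠ 0 with hPdef
  -- openness of the nonvanishing set
  have hA : ∀ τ₀ : ℝ, ∃ δ > 0, τ₀ ∈ Set.Icc (0:ℝ) 1 → P τ₀ →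
      ∀ τ ∈ Set.Icc (0:ℝ) 1, dist τ τ₀ < δ → P τ := by
    intro τ₀
    by_cases h : τ₀ ∈ Set.Icc (0:ℝ) 1 ∧ P τ₀
    · obtain ⟨hτ₀, hPτ₀⟩ := h
      have hKne : K.Nonempty := ⟨0, by simp [hK]; exact hR.le⟩
      obtain ⟨z₀, hz₀K, hz₀min⟩ := hKcomp.exists_isMinOn hKne
        (((hslice τ₀ hτ₀).mono Set.inter_subset_right).norm)
      have hmpos : 0 < ‖f τ₀ z₀‖ := norm_pos_iff.2 (hPτ₀ z₀ hz₀K.2)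
      obtain ⟨δ, hδ, hδUC⟩ := hUC ‖f τ₀ z₀‖ hmpos
      refine ⟨δ, hδ, fun _ _ τ hτ hd s hs => ?_⟩
      rcases le_or_gt R ‖s‖ with hsR | hsR
      · intro h0; have := hinf τ hτ s hs hsR; rw [h0] at this; simp at this; linarith
      · have hsK : s ∈ K := ⟨Metric.mem_closedBall.2 (by simpa using hsR.le), hs⟩
        have hdist : dist ((τ, s) : ℝ × ℂ) (τ₀, s) < δ := by
          rw [Prod.dist_eq]; simp only [dist_self]; exact max_lt hd hδ
        have hval := hδUC (τ, s) ⟨hτ, hsK⟩ (τ₀, s) ⟨hτ₀, hsK⟩ hdist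
        intro h0
        simp only [h0] at hval
        rw [dist_eq_norm, zero_sub, norm_neg] at hval
        have := isMinOn_iff.1 hz₀min s hsK
        linarith
    · exact ⟨1, one_pos, fun h1 h2 => absurd ⟨h1, h2⟩ h⟩
  -- openness of the vanishing set
  have hB : ∀ τ₀ : ℝ, ∃ δ > 0, τ₀ ∈ Set.Icc (0:ℝ) 1 → ¬ P τ₀ →
      ∀ τ ∈ Set.Icc (0:ℝ) 1, dist τ τ₀ < δ → ¬ P τ := by
    intro τ₀
    by_cases h : τ₀ ∈ Set.Icc (0:ℝ) 1 ∧ ¬ P τ₀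
    · obtain ⟨hτ₀, hPτ₀⟩ := h
      simp only [hPdef, not_forall] at hPτ₀
      obtain ⟨s₀, hs₀re, hs₀z⟩ := hPτ₀
      rw [not_not] at hs₀z
      obtain ⟨hs₀pos, hs₀R⟩ := hzloc τ₀ hτ₀ s₀ hs₀re hs₀z
      have han : AnalyticOnNhd ℂ (f τ₀) {s : ℂ | 0 < s.re} :=
        (hdiff τ₀ hτ₀).analyticOnNhd hORHP
      rcases (han s₀ hs₀pos).eventually_eq_zero_or_eventually_ne_zero with hev | hev
      · exfalso
        have heq : Set.EqOn (f τ₀) 0 {s : ℂ | 0 < s.re} :=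
          han.eqOn_zero_of_preconnected_of_eventuallyEq_zero
            (convex_halfSpace_re_gt (r := 0)).isPreconnected hs₀pos (hev.mono fun z h => h)
        have hx : ((R+1 : ℝ) : ℂ) ∈ {s : ℂ | 0 < s.re} := by simp; linarith
        have := hinf τ₀ hτ₀ ((R+1:ℝ):ℂ) (by simp; linarith)
          (by rw [Complex.norm_real, Real.norm_eq_abs, abs_of_pos (by linarith)]; linarith)
        rw [heq hx] at this; simp at this; linarith
      · -- pick a good closed ball around s₀
        have hWev : ∀ᶠ z in nhds s₀, (z ≠ s₀ → f τ₀ z ≠ 0) ∧ (0 < z.re ∧ ‖z‖ < R) := by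
          filter_upwards [eventually_nhdsWithin_iff.1 hev,
            hORHP.eventually_mem hs₀pos,
            Metric.isOpen_ball.eventually_mem (Metric.mem_ball.2 (by
              rw [dist_zero_right]; exact hs₀R))] with z h1 h2 h3
          refine ⟨fun hne => h1 (by simpa using hne), h2, ?_⟩
          rw [← dist_zero_right]; exact Metric.mem_ball.1 h3
        obtain ⟨ε, hε, hεkey⟩ := Metric.eventually_nhds_iff.1 hWev
        set r : ℝ := ε / 2 with hrdef
        have hr : 0 < r := by positivity
        have hkey : ∀ z ∈ Metric.closedBall s₀ r,
            (z ≠ s₀ → f τ₀ z ≠ 0) ∧ 0 < z.re ∧ ‖z‖ < R := by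
          intro z hz
          exact hεkey (lt_of_le_of_lt (Metric.mem_closedBall.1 hz) (by linarith))
        have hcbK : Metric.closedBall s₀ r ⊆ K := fun z hz =>
          ⟨Metric.mem_closedBall.2 (by simpa [dist_zero_right] using (hkey z hz).2.2.le),
           (hkey z hz).2.1.le⟩
        have hcbO : Metric.closedBall s₀ r ⊆ {s : ℂ | 0 < s.re} := fun z hz => (hkey z hz).2.1
        -- minimum on the sphere
        have hsphcb : Metric.sphere s₀ r ⊆ Metric.closedBall s₀ r := Metric.sphere_subset_closedBall
        have hsphne : (Metric.sphere s₀ r).Nonempty := NormedSpace.sphere_nonempty.2 hr.le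
        obtain ⟨z₁, hz₁sph, hz₁min⟩ := (isCompact_sphere s₀ r).exists_isMinOn hsphne
          (((hslice τ₀ hτ₀).mono (fun z hz => (hcbK (hsphcb hz)).2)).norm)
        have hz₁ne : z₁ ≠ s₀ := by
          intro hzz
          have := Metric.mem_sphere.1 hz₁sph
          rw [hzz, dist_self] at this
          exact hr.ne' this.symm
        have hεpos : 0 < ‖f τ₀ z₁‖ :=
          norm_pos_iff.2 ((hkey z₁ (hsphcb hz₁sph)).1 hz₁ne)
        set m : ℝ := ‖f τ₀ z₁‖ with hmdef
        obtain ⟨δ, hδ, hδUC⟩ := hUC (m / 2) (by positivity)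
        refine ⟨δ, hδ, fun _ _ τ hτ hd hPτ => ?_⟩
        -- f τ is small at s₀
        have hs₀K : s₀ ∈ K := hcbK (Metric.mem_closedBall_self hr.le)
        have hsmall : ‖f τ s₀‖ < m / 2 := by
          have hval := hδUC (τ, s₀) ⟨hτ, hs₀K⟩ (τ₀, s₀) ⟨hτ₀, hs₀K⟩
            (by rw [Prod.dist_eq]; simp only [dist_self]; exact max_lt hd hδ)
          simpa [hs₀z, dist_eq_norm] using hval
        -- f τ is at least m/2 on the sphere
        have hbig : ∀ z ∈ Metric.sphere s₀ r, m / 2 ≤ ‖f τ z‖ := by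
          intro z hz
          have hzK : z ∈ K := hcbK (hsphcb hz)
          have hval := hδUC (τ, z) ⟨hτ, hzK⟩ (τ₀, z) ⟨hτ₀, hzK⟩
            (by rw [Prod.dist_eq]; simp only [dist_self]; exact max_lt hd hδ)
          rw [dist_eq_norm] at hval
          have h1 : m ≤ ‖f τ₀ z‖ := isMinOn_iff.1 hz₁min z hz
          have h2 : ‖f τ₀ z‖ - ‖f τ z‖ ≤ ‖f τ z - f τ₀ z‖ := by
            have := norm_sub_norm_le (f τ₀ z) (f τ z)
            rw [← norm_neg (f τ₀ z - f τ z)] at this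
            simpa [neg_sub] using this
          linarith
        -- minimum modulus principle applied to (f τ)⁻¹
        have hfτne : ∀ z ∈ Metric.closedBall s₀ r, f τ z ≠ 0 :=
          fun z hz => hPτ z (hcbO hz).le
        have hdg : DifferentiableOn ℂ (fun z => (f τ z)⁻¹) (Metric.ball s₀ r) :=
          (((hdiff τ hτ).mono (Metric.ball_subset_closedBall.trans hcbO)).inv
            (fun z hz => hfτne z (Metric.ball_subset_closedBall hz)))
        have hcg : ContinuousOn (fun z => (f τ z)⁻¹) (Metric.closedBall s₀ r) :=
          (((hslice τ hτ).mono (fun z hz => by have h := hcbO hz; simp only [Set.mem_setOf_eq] at h ⊢; exact h.le)).inv₀ hfτne)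
        have hdcl : DiffContOnCl ℂ (fun z => (f τ z)⁻¹) (Metric.ball s₀ r) :=
          ⟨hdg, by rw [closure_ball s₀ hr.ne']; exact hcg⟩
        have hmax := Complex.norm_le_of_forall_mem_frontier_norm_le
          (Metric.isBounded_ball (x := s₀) (r := r)) hdcl (C := (m / 2)⁻¹) ?_ (z := s₀) ?_
        · rw [norm_inv] at hmax
          have hfpos : 0 < ‖f τ s₀‖ :=
            norm_pos_iff.2 (hfτne s₀ (Metric.mem_closedBall_self hr.le))
          have : m / 2 ≤ ‖f τ s₀‖ := by
            have hm2 : (0:ℝ) < m / 2 := by positivity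
            nlinarith [mul_pos hfpos hm2, inv_pos.2 hfpos, inv_pos.2 hm2,
              mul_inv_cancel₀ hfpos.ne', mul_inv_cancel₀ hm2.ne']
          linarith
        · intro z hz
          rw [frontier_ball s₀ hr.ne'] at hz
          rw [norm_inv]
          have h1 := hbig z hz
          have h2 : (0:ℝ) < m / 2 := by positivity
          exact inv_anti₀ h2 h1
        · rw [closure_ball s₀ hr.ne']
          exact Metric.mem_closedBall_self hr.le
    · exact ⟨1, one_pos, fun h1 h2 => absurd ⟨h1, h2⟩ h⟩
  -- connectedness argument
  choose δA hδA hA using hA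
  choose δB hδB hB using hB
  intro s hs
  by_contra hzero1
  have h1notP : ¬ P 1 := fun hp => hp s hs hzero1
  have h0P : P 0 := fun z hz => hinit z hz
  set U : Set ℝ := ⋃ τ₀ ∈ {τ ∈ Set.Icc (0:ℝ) 1 | P τ}, Metric.ball τ₀ (δA τ₀) with hUdef
  set V : Set ℝ := ⋃ τ₀ ∈ {τ ∈ Set.Icc (0:ℝ) 1 | ¬ P τ}, Metric.ball τ₀ (δB τ₀) with hVdef
  have hcover : Set.Icc (0:ℝ) 1 ⊆ U ∪ V := by
    intro τ hτ
    by_cases hPt : P τ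
    · exact Or.inl (Set.mem_biUnion ⟨hτ, hPt⟩ (Metric.mem_ball_self (hδA τ)))
    · exact Or.inr (Set.mem_biUnion ⟨hτ, hPt⟩ (Metric.mem_ball_self (hδB τ)))
  have h0Icc : (0:ℝ) ∈ Set.Icc (0:ℝ) 1 := ⟨le_refl 0, zero_le_one⟩
  have h1Icc : (1:ℝ) ∈ Set.Icc (0:ℝ) 1 := ⟨zero_le_one, le_refl 1⟩
  obtain ⟨x, hxIcc, hxU, hxV⟩ := isPreconnected_Icc (a := (0:ℝ)) (b := 1) U V
    (isOpen_biUnion fun _ _ => Metric.isOpen_ball) (isOpen_biUnion fun _ _ => Metric.isOpen_ball)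
    hcover
    ⟨0, h0Icc, Set.mem_biUnion ⟨h0Icc, h0P⟩ (Metric.mem_ball_self (hδA 0))⟩
    ⟨1, h1Icc, Set.mem_biUnion ⟨h1Icc, h1notP⟩ (Metric.mem_ball_self (hδB 1))⟩
  obtain ⟨τ₀, hτ₀mem, hxball⟩ := Set.mem_iUnion₂.1 hxU
  obtain ⟨τ₁, hτ₁mem, hxball'⟩ := Set.mem_iUnion₂.1 hxV
  exact hB τ₁ hτ₁mem.1 hτ₁mem.2 x hxIcc (Metric.mem_ball.1 hxball')
    (hA τ₀ hτ₀mem.1 hτ₀mem.2 x hxIcc (Metric.mem_ball.1 hxball))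
end

section
/- (Strong passivity theorem as a special case of the small phase theorem) Let A₁, B₁, C₁, D₁ and A₂, B₂, C₂, D₂ be real matrices of sizes n₁×n₁, n₁×m, m×n₁, m×m and n₂×n₂, n₂×m, m×n₂, m×m with A₁, A₂ Hurwitz stable, and define G(s) = C₁(s•1 − A₁)⁻¹B₁ + D₁ and H(s) = C₂(s•1 − A₂)⁻¹B₂ + D₂ over ℂ. Assume G and H are strongly positive real: for all ω ∈ ℝ, G(ω*I) + (G(ω*I))ᴴ and H(ω*I) + (H(ω*I))ᴴ are positive definite, and D₁ + D₁ᵀ and D₂ + D₂ᵀ are positive definite. Then det(1 + G(s) * H(s)) ≠ 0 for every s ∈ ℂ with 0 ≤ s.re; consequently the negative feedback interconnection of G and H is stable. -/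
open Matrix
open scoped ComplexOrder

/-- The transfer function `G(s) = C (sI - A)⁻¹ B + D` of a real state-space system,
with all matrices coerced to `ℂ`. -/
noncomputable def transferFunction {n m : ℕ} (A : Matrix (Fin n) (Fin n) ℝ)
    (B : Matrix (Fin n) (Fin m) ℝ) (C : Matrix (Fin m) (Fin n) ℝ)
    (D : Matrix (Fin m) (Fin m) ℝ) (s : ℂ) : Matrix (Fin m) (Fin m) ℂ :=
  C.map Complex.ofReal * (s • (1 : Matrix (Fin n) (Fin n) ℂ) - A.map Complex.ofReal)⁻¹ *
    B.map Complex.ofReal + D.map Complex.ofReal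

/-- A real square matrix is Hurwitz stable if all its complex eigenvalues have
negative real part. -/
def IsHurwitz {n : ℕ} (A : Matrix (Fin n) (Fin n) ℝ) : Prop :=
  ∀ μ ∈ spectrum ℂ (A.map Complex.ofReal), μ.re < 0

/-!
Fix `y ≠ 0`. Since `A` is Hurwitz, `g(s) = y* G(s) y` is holomorphic near the closed right
half-plane, and `g(s) → y* D y` as `s → ∞` because the resolvent vanishes at infinity; strong
positive realness says `Re g > 0` on the imaginary axis. Phragmén–Lindelöf for the bounded
function `exp (-g)` gives `Re g ≥ 0` on the closed half-plane, and the maximum modulus principle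
makes this strict. Hence, for `Re s ≥ 0`, if `(1 + G(s) H(s)) x = 0` with `x ≠ 0`, then
`v = H(s) x` satisfies `G(s) v = -x`, so `0 ≤ Re v* G(s) v = -Re x* H(s) x < 0`.
-/

attribute [local instance] Matrix.linftyOpNormedAddCommGroup Matrix.linftyOpNormedRing
  Matrix.linftyOpNormedAlgebra

open Filter Topology Bornology Complex

theorem DiffContOnCl.cexp {E : Type*} [NormedAddCommGroup E] [NormedSpace ℂ E] {f : E → ℂ}
    {s : Set E} (hf : DiffContOnCl ℂ f s) : DiffContOnCl ℂ (fun z => exp (f z)) s :=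
  ⟨hf.differentiableOn.cexp, hf.continuousOn.cexp⟩

section RightHalfPlane

variable {g : ℂ → ℂ}

theorem re_nonneg_of_re_nonneg_on_imaginaryAxis (hd : DiffContOnCl ℂ g {z | 0 < z.re})
    (hb : IsBoundedUnder (· ≤ ·) (cobounded ℂ) (‖g ·‖)) (hi : ∀ ω : ℝ, 0 ≤ (g (ω * I)).re)
    {z : ℂ} (hz : 0 ≤ z.re) : 0 ≤ (g z).re := by
  have hfb : IsBoundedUnder (· ≤ ·) (cobounded ℂ) (fun z => ‖exp (-g z)‖) :=
    (Real.exp_monotone.isBoundedUnder_le_comp hb).mono_le <| .of_forall fun z => by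
      simpa [norm_exp] using (neg_le_abs _).trans (abs_re_le_norm (g z))
  have hPL := PhragmenLindelof.right_half_plane_of_bounded_on_real hd.neg.cexp
    ⟨0, two_pos, 0, by simpa using (Asymptotics.isBigO_one_iff ℝ).2 (hfb.mono inf_le_left)⟩
    ((isBoundedUnder_map_iff (f := (fun z => ‖exp (-g z)‖))).1
      (hfb.mono (RCLike.tendsto_ofReal_atTop_cobounded ℂ)))
    (C := 1) (fun ω => by simpa [norm_exp] using hi ω) hz
  simpa [norm_exp] using hPL

theorem re_pos_of_re_pos_on_imaginaryAxis (hd : DiffContOnCl ℂ g {z | 0 < z.re})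
    (hb : IsBoundedUnder (· ≤ ·) (cobounded ℂ) (‖g ·‖)) (hi : ∀ ω : ℝ, 0 < (g (ω * I)).re)
    {z : ℂ} (hz : 0 ≤ z.re) : 0 < (g z).re := by
  have hnonneg {w : ℂ} (hw : 0 ≤ w.re) : 0 ≤ (g w).re :=
    re_nonneg_of_re_nonneg_on_imaginaryAxis hd hb (fun ω => (hi ω).le) hw
  refine (hnonneg hz).lt_of_ne' fun hgz => ?_
  rcases hz.eq_or_lt with hz0 | hz0
  · have hzI : z = z.im * I := Complex.ext (by simp [← hz0]) (by simp)
    exact (hi z.im).ne' (hzI ▸ hgz)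
  · -- `‖exp (-g)‖ = exp (-Re g) ≤ 1` attains its maximum at the interior point `z`,
    -- so it is `1` on the whole closed half-plane, in particular at `0`.
    have hmax : IsMaxOn (norm ∘ fun w => exp (-g w)) {w | 0 < w.re} z := fun w hw => by
      simpa [norm_exp, hgz] using hnonneg (le_of_lt hw)
    have hconst := Complex.norm_eqOn_closure_of_isPreconnected_of_isMaxOn
      (convex_halfSpace_re_gt 0).isPreconnected (isOpen_lt continuous_const continuous_re)
      hd.neg.cexp hz0 hmax (show (0 : ℂ) ∈ closure {w : ℂ | 0 < w.re} by simp)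
    have h0 := hi 0
    simp [norm_exp, hgz] at hconst h0
    linarith

end RightHalfPlane

namespace Matrix

variable {n : Type*} [Fintype n]

noncomputable def dotProductMulVecCLM [DecidableEq n] (u v : n → ℂ) : Matrix n n ℂ →L[ℂ] ℂ :=
  LinearMap.toContinuousLinearMap
    (LinearMap.applyₗ v ∘ₗ LinearMap.applyₗ u ∘ₗ (toLinearMap₂' ℂ).toLinearMap)

@[simp]
theorem dotProductMulVecCLM_apply [DecidableEq n] (u v : n → ℂ) (X : Matrix n n ℂ) :
    dotProductMulVecCLM u v X = u ⬝ᵥ (X *ᵥ v) := by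
  simp [dotProductMulVecCLM, toLinearMap₂'_apply']

theorem re_dotProduct_mulVec_pos_of_posDef_add_conjTranspose {M : Matrix n n ℂ}
    (hM : (M + Mᴴ).PosDef) {x : n → ℂ} (hx : x ≠ 0) : 0 < (star x ⬝ᵥ (M *ᵥ x)).re := by
  have h := (Complex.pos_iff.1 (hM.dotProduct_mulVec_pos hx)).1
  have hadj : star x ⬝ᵥ (Mᴴ *ᵥ x) = star (star x ⬝ᵥ (M *ᵥ x)) := by
    rw [dotProduct_mulVec, ← star_mulVec, star_dotProduct]
  rw [add_mulVec, dotProduct_add, hadj, Complex.add_re, Complex.star_def, Complex.conj_re] at h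
  linarith

theorem det_one_add_mul_ne_zero [DecidableEq n] {G H : Matrix n n ℂ}
    (hG : ∀ x, 0 ≤ (star x ⬝ᵥ (G *ᵥ x)).re) (hH : ∀ x ≠ 0, 0 < (star x ⬝ᵥ (H *ᵥ x)).re) :
    (1 + G * H).det ≠ 0 := by
  intro hdet
  obtain ⟨x, hx, hker⟩ := exists_mulVec_eq_zero_iff.2 hdet
  have hGHx : G *ᵥ (H *ᵥ x) = -x := by
    rw [add_mulVec, one_mulVec, ← mulVec_mulVec] at hker
    exact eq_neg_of_add_eq_zero_right hker
  have hGv := hG (H *ᵥ x)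
  rw [hGHx, dotProduct_neg, star_dotProduct, Complex.neg_re, Complex.star_def,
    Complex.conj_re] at hGv
  linarith [hH x hx]

end Matrix

theorem IsHurwitz.mem_resolventSet {n : ℕ} {A : Matrix (Fin n) (Fin n) ℝ} (hA : IsHurwitz A)
    {s : ℂ} (hs : 0 ≤ s.re) : s ∈ resolventSet ℂ (A.map ofReal) :=
  spectrum.notMem_iff.1 fun h => (hA s h).not_ge hs

section TransferFunction

variable {n m : ℕ} (A : Matrix (Fin n) (Fin n) ℝ) (B : Matrix (Fin n) (Fin m) ℝ)
  (C : Matrix (Fin m) (Fin n) ℝ) (D : Matrix (Fin m) (Fin m) ℝ) (y : Fin m → ℂ)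

theorem dotProduct_transferFunction_mulVec (s : ℂ) :
    star y ⬝ᵥ (transferFunction A B C D s *ᵥ y) =
      Matrix.dotProductMulVecCLM (star y ᵥ* C.map ofReal) (B.map ofReal *ᵥ y)
        (resolvent (A.map ofReal) s) + star y ⬝ᵥ (D.map ofReal *ᵥ y) := by
  rw [transferFunction, resolvent, Algebra.algebraMap_eq_smul_one,
    Matrix.nonsing_inv_eq_ringInverse]
  simp [Matrix.add_mulVec, ← Matrix.mulVec_mulVec, Matrix.dotProduct_mulVec]

theorem differentiableAt_dotProduct_transferFunction_mulVec {s : ℂ}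
    (hs : s ∈ resolventSet ℂ (A.map ofReal)) :
    DifferentiableAt ℂ (fun z => star y ⬝ᵥ (transferFunction A B C D z *ᵥ y)) s := by
  simp only [dotProduct_transferFunction_mulVec]
  exact ((ContinuousLinearMap.differentiableAt _).comp s
    (spectrum.hasDerivAt_resolvent_const_left hs).differentiableAt).add_const _

theorem tendsto_dotProduct_transferFunction_mulVec_cobounded :
    Tendsto (fun z => star y ⬝ᵥ (transferFunction A B C D z *ᵥ y)) (cobounded ℂ)
      (𝓝 (star y ⬝ᵥ (D.map ofReal *ᵥ y))) := by
  simp only [dotProduct_transferFunction_mulVec]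
  have h := (((Matrix.dotProductMulVecCLM (star y ᵥ* C.map ofReal)
    (B.map ofReal *ᵥ y)).continuous.tendsto 0).comp
    (spectrum.resolvent_tendsto_cobounded (𝕜 := ℂ) (A.map ofReal))).add_const
      (star y ⬝ᵥ (D.map ofReal *ᵥ y))
  rwa [map_zero, zero_add] at h

variable {A B C D y}

theorem re_dotProduct_transferFunction_mulVec_pos (hA : IsHurwitz A)
    (hG : ∀ ω : ℝ, (transferFunction A B C D (ω * I) +
      (transferFunction A B C D (ω * I))ᴴ).PosDef)
    (hy : y ≠ 0) {s : ℂ} (hs : 0 ≤ s.re) :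
    0 < (star y ⬝ᵥ (transferFunction A B C D s *ᵥ y)).re := by
  refine re_pos_of_re_pos_on_imaginaryAxis
    (g := fun z => star y ⬝ᵥ (transferFunction A B C D z *ᵥ y))
    (DifferentiableOn.diffContOnCl fun z hz => ?_)
    (tendsto_dotProduct_transferFunction_mulVec_cobounded A B C D y).norm.isBoundedUnder_le
    (fun ω => Matrix.re_dotProduct_mulVec_pos_of_posDef_add_conjTranspose (hG ω) hy) hs
  rw [closure_setOfPred_lt_re] at hz
  exact (differentiableAt_dotProduct_transferFunction_mulVec A B C D y
    (hA.mem_resolventSet hz)).differentiableWithinAt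

end TransferFunction

theorem strong_passivity_theorem_general {n₁ n₂ m : ℕ}
    (A₁ : Matrix (Fin n₁) (Fin n₁) ℝ) (B₁ : Matrix (Fin n₁) (Fin m) ℝ)
    (C₁ : Matrix (Fin m) (Fin n₁) ℝ) (D₁ : Matrix (Fin m) (Fin m) ℝ)
    (A₂ : Matrix (Fin n₂) (Fin n₂) ℝ) (B₂ : Matrix (Fin n₂) (Fin m) ℝ)
    (C₂ : Matrix (Fin m) (Fin n₂) ℝ) (D₂ : Matrix (Fin m) (Fin m) ℝ)
    (hA₁ : IsHurwitz A₁) (hA₂ : IsHurwitz A₂)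
    (hG : ∀ ω : ℝ,
      (transferFunction A₁ B₁ C₁ D₁ ((ω : ℂ) * Complex.I) +
        (transferFunction A₁ B₁ C₁ D₁ ((ω : ℂ) * Complex.I)).conjTranspose).PosDef)
    (hH : ∀ ω : ℝ,
      (transferFunction A₂ B₂ C₂ D₂ ((ω : ℂ) * Complex.I) +
        (transferFunction A₂ B₂ C₂ D₂ ((ω : ℂ) * Complex.I)).conjTranspose).PosDef) :
    ∀ s : ℂ, 0 ≤ s.re →
      (1 + transferFunction A₁ B₁ C₁ D₁ s * transferFunction A₂ B₂ C₂ D₂ s).det ≠ 0 := by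
  intro s hs
  refine Matrix.det_one_add_mul_ne_zero (fun x => ?_)
    (fun x hx => re_dotProduct_transferFunction_mulVec_pos hA₂ hH hx hs)
  rcases eq_or_ne x 0 with rfl | hx
  · simp
  · exact (re_dotProduct_transferFunction_mulVec_pos hA₁ hG hx hs).le

/-- Strong passivity theorem: the negative feedback interconnection of two stable
strongly positive real systems is stable, i.e. `det (I + G(s) H(s)) ≠ 0` on the closed
right half-plane. -/
theorem strong_passivity_theorem {n₁ n₂ m : ℕ}
    (A₁ : Matrix (Fin n₁) (Fin n₁) ℝ) (B₁ : Matrix (Fin n₁) (Fin m) ℝ)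
    (C₁ : Matrix (Fin m) (Fin n₁) ℝ) (D₁ : Matrix (Fin m) (Fin m) ℝ)
    (A₂ : Matrix (Fin n₂) (Fin n₂) ℝ) (B₂ : Matrix (Fin n₂) (Fin m) ℝ)
    (C₂ : Matrix (Fin m) (Fin n₂) ℝ) (D₂ : Matrix (Fin m) (Fin m) ℝ)
    (hA₁ : IsHurwitz A₁) (hA₂ : IsHurwitz A₂)
    (hG : ∀ ω : ℝ,
      (transferFunction A₁ B₁ C₁ D₁ ((ω : ℂ) * Complex.I) +
        (transferFunction A₁ B₁ C₁ D₁ ((ω : ℂ) * Complex.I)).conjTranspose).PosDef)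
    (hH : ∀ ω : ℝ,
      (transferFunction A₂ B₂ C₂ D₂ ((ω : ℂ) * Complex.I) +
        (transferFunction A₂ B₂ C₂ D₂ ((ω : ℂ) * Complex.I)).conjTranspose).PosDef)
    (hD₁ : (D₁ + D₁.transpose).PosDef) (hD₂ : (D₂ + D₂.transpose).PosDef) :
    ∀ s : ℂ, 0 ≤ s.re →
      (1 + transferFunction A₁ B₁ C₁ D₁ s * transferFunction A₂ B₂ C₂ D₂ s).det ≠ 0 :=
  strong_passivity_theorem_general A₁ B₁ C₁ D₁ A₂ B₂ C₂ D₂ hA₁ hA₂ hG hH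
end
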